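/- arXiv:2505.23136 — 4 statements merged into one kernel-verified Lean document; each statement's English description precedes it below -/
import Mathlib

section
/- For every h > 0, t₀ = (1 + e^h)^{-1}, and every t ∈ [0,1], one has h·t ≤ 2·s(t, t₀) + h/(1 + e^{h/2}), where s(t,t') = t·log(t/t') + (1-t)·log((1-t)/(1-t')). -/
/-- The pointwise relative entropy `s(t,t') = t·log(t/t') + (1-t)·log((1-t)/(1-t'))`. -/
noncomputable def relEntropy (t t' : ℝ) : ℝ :=
  t * Real.log (t / t') + (1 - t) * Real.log ((1 - t) / (1 - t'))

lemma aux_sub_le_mul_log {x c : ℝ} (hx : 0 ≤ x) (hc : 0 < c) :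
    x - c ≤ x * Real.log (x / c) := by
  rcases eq_or_lt_of_le hx with h0 | h0
  · simp [← h0]; linarith
  · have hcx : 0 < c / x := by positivity
    have := Real.log_le_sub_one_of_pos hcx
    have hlog : Real.log (c / x) = - Real.log (x / c) := by
      rw [← Real.log_inv]; congr 1; field_simp
    rw [hlog] at this
    have : 1 - c / x ≤ Real.log (x / c) := by linarith
    have h2 : x * (1 - c / x) ≤ x * Real.log (x / c) :=
      mul_le_mul_of_nonneg_left this hx
    have h3 : x * (1 - c / x) = x - c := by field_simp
    linarith [h2, h3.symm ▸ h2]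

lemma gibbs {t u : ℝ} (ht0 : 0 ≤ t) (ht1 : t ≤ 1) (hu : 0 < u) (hu1 : u < 1) :
    0 ≤ relEntropy t u := by
  unfold relEntropy
  have h1 := aux_sub_le_mul_log ht0 hu
  have h2 := aux_sub_le_mul_log (by linarith : (0:ℝ) ≤ 1 - t) (by linarith : (0:ℝ) < 1 - u)
  linarith

lemma relEntropy_shift {t u v : ℝ} (ht1 : t ≤ 1) (hu : 0 < u)
    (hu1 : u < 1) (hv : 0 < v) (hv1 : v < 1) :
    relEntropy t v = relEntropy t u + t * Real.log (u / v)
      + (1 - t) * Real.log ((1 - u) / (1 - v)) := by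
  unfold relEntropy
  have e1 : t * Real.log (t / v) = t * Real.log (t / u) + t * Real.log (u / v) := by
    rcases eq_or_ne t 0 with h0 | h0
    · simp [h0]
    · have hm : (t / u) * (u / v) = t / v := by field_simp
      rw [← hm, Real.log_mul (div_ne_zero h0 hu.ne') (div_ne_zero hu.ne' hv.ne')]
      ring
  have e2 : (1 - t) * Real.log ((1 - t) / (1 - v)) =
      (1 - t) * Real.log ((1 - t) / (1 - u)) + (1 - t) * Real.log ((1 - u) / (1 - v)) := by
    rcases eq_or_ne (1 - t) 0 with h0 | h0
    · simp [h0]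
    · have hu' : (1 : ℝ) - u ≠ 0 := by intro hc; nlinarith [hc]
      have hv' : (1 : ℝ) - v ≠ 0 := by intro hc; nlinarith [hc]
      have hm : ((1 - t) / (1 - u)) * ((1 - u) / (1 - v)) = (1 - t) / (1 - v) := by
        field_simp
      rw [← hm, Real.log_mul (div_ne_zero h0 hu') (div_ne_zero hu' hv')]
      ring
  linarith

lemma amgm_log {a : ℝ} (ha : 1 < a) :
    a * Real.log a ≤ (1 + a) * Real.log ((1 + a ^ 2) / (1 + a)) := by
  have ha0 : (0:ℝ) < a := by linarith
  have h1a : (0:ℝ) < 1 + a := by linarith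
  have hw : 1 / (1 + a) + a / (1 + a) = 1 := by field_simp
  have key := Real.geom_mean_le_arith_mean2_weighted
    (by positivity : (0:ℝ) ≤ 1 / (1 + a)) (by positivity : (0:ℝ) ≤ a / (1 + a))
    (by norm_num : (0:ℝ) ≤ 1) (le_of_lt ha0) hw
  have key2 : a ^ (a / (1 + a)) ≤ (1 + a ^ 2) / (1 + a) := by
    have : (1:ℝ) ^ (1 / (1 + a)) * a ^ (a / (1 + a)) ≤
        1 / (1 + a) * 1 + a / (1 + a) * a := key
    rw [Real.one_rpow, one_mul] at this
    calc a ^ (a / (1 + a)) ≤ 1 / (1 + a) * 1 + a / (1 + a) * a := this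
      _ = (1 + a ^ 2) / (1 + a) := by field_simp
  have hlog := Real.log_le_log (by positivity) key2
  rw [Real.log_rpow ha0] at hlog
  have : (1 + a) * (a / (1 + a) * Real.log a) ≤
      (1 + a) * Real.log ((1 + a ^ 2) / (1 + a)) :=
    mul_le_mul_of_nonneg_left hlog (le_of_lt h1a)
  calc a * Real.log a = (1 + a) * (a / (1 + a) * Real.log a) := by field_simp
    _ ≤ (1 + a) * Real.log ((1 + a ^ 2) / (1 + a)) := this

/-- For every `h > 0`, `t₀ = (1 + e^h)⁻¹` and every `t ∈ [0,1]`,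
`h·t ≤ 2·s(t,t₀) + h/(1 + e^{h/2})`. -/
theorem stmt0 (h t : ℝ) (hh : 0 < h) (ht : t ∈ Set.Icc (0 : ℝ) 1) :
    h * t ≤ 2 * relEntropy t (1 + Real.exp h)⁻¹ + h / (1 + Real.exp (h / 2)) := by
  obtain ⟨ht0, ht1⟩ := ht
  set F := Real.exp (h / 2) with hF
  set E := Real.exp h with hE
  have hF1 : 1 < F := by
    rw [hF, ← Real.exp_zero]
    exact Real.exp_lt_exp.mpr (by linarith)
  have hF0 : (0:ℝ) < F := by linarith
  have hEF : E = F ^ 2 := by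
    rw [hE, hF, sq, ← Real.exp_add]
    congr 1; ring
  have hE1 : 1 < E := by rw [hEF]; nlinarith
  have h1F : (0:ℝ) < 1 + F := by linarith
  have h1E : (0:ℝ) < 1 + E := by linarith
  have hlogF : Real.log F = h / 2 := by rw [hF, Real.log_exp]
  -- positions u and v
  have hu : (0:ℝ) < (1 + F)⁻¹ := by positivity
  have hu1 : (1 + F)⁻¹ < 1 := by
    rw [inv_lt_one_iff₀]; right; linarith
  have hv : (0:ℝ) < (1 + E)⁻¹ := by positivity
  have hv1 : (1 + E)⁻¹ < 1 := by
    rw [inv_lt_one_iff₀]; right; linarith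
  have hshift := relEntropy_shift ht1 hu hu1 hv hv1
  -- compute the two log terms
  have hL1 : Real.log ((1 + F)⁻¹ / (1 + E)⁻¹) = Real.log (1 + E) - Real.log (1 + F) := by
    have e0 : (1 + F)⁻¹ / (1 + E)⁻¹ = (1 + E) / (1 + F) := by
      field_simp
    rw [e0, Real.log_div (by positivity) (by positivity)]
  have hL2 : Real.log ((1 - (1 + F)⁻¹) / (1 - (1 + E)⁻¹)) =
      Real.log (1 + E) - Real.log (1 + F) - h / 2 := by
    have e1 : 1 - (1 + F)⁻¹ = F / (1 + F) := by field_simp; ring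
    have e2 : 1 - (1 + E)⁻¹ = E / (1 + E) := by field_simp; ring
    rw [e1, e2, Real.log_div (by positivity) (by positivity),
      Real.log_div (by positivity) (by positivity),
      Real.log_div (by positivity) (by positivity), hlogF]
    have : Real.log E = h := by rw [hE, Real.log_exp]
    rw [this]; ring
  have hG := gibbs ht0 ht1 hu hu1
  have hA := amgm_log hF1
  have hA' : F * (h / 2) ≤ (1 + F) * (Real.log (1 + E) - Real.log (1 + F)) := by
    have : Real.log ((1 + F ^ 2) / (1 + F)) = Real.log (1 + E) - Real.log (1 + F) := by
      rw [← hEF, Real.log_div (by positivity) (by positivity)]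
    rw [this, hlogF] at hA
    linarith
  set L := Real.log (1 + E) - Real.log (1 + F) with hLdef
  rw [hshift, hL1, hL2]
  have hdiv : h / (1 + F) * (1 + F) = h := by field_simp
  have h2L : h * F ≤ 2 * L * (1 + F) := by nlinarith
  have hfrac : h - h / (1 + F) ≤ 2 * L := by
    nlinarith [h2L, hdiv, h1F]
  have hfrac' : 0 ≤ h / (1 + F) := by positivity
  nlinarith [mul_nonneg (sub_nonneg.mpr ht1) hh.le]
end

section
/- Let ε₀ > 0, k_F > 0 with ε₀ ≤ k_F². Then ∫_{|q| ≤ k_F} dq/(k_F² - |q|² + ε₀) ≤ C·k_F·(1 + |ln(ε₀/k_F²)|) for a universal constant C. In particular, for ε₀ = ρ^{2/3+ι}, k_F ∼ ρ^{1/3}, ι > 0, the left-hand side is bounded by C·ρ^{1/3}·|ln ρ|. -/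
open MeasureTheory

open Metric Set in
lemma stmt7_main (kF ε₀ : ℝ) (hk : 0 < kF) (he : 0 < ε₀) (hle : ε₀ ≤ kF ^ 2) :
    (∫ q in closedBall (0 : EuclideanSpace ℝ (Fin 3)) kF, (kF ^ 2 - ‖q‖ ^ 2 + ε₀)⁻¹)
      ≤ (3 * (volume (ball (0 : EuclideanSpace ℝ (Fin 3)) 1)).toReal) * kF *
        (1 + |Real.log (ε₀ / kF ^ 2)|) := by
  set V : ℝ := (volume (ball (0 : EuclideanSpace ℝ (Fin 3)) 1)).toReal with hV
  have hV0 : 0 ≤ V := ENNReal.toReal_nonneg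
  set h : ℝ → ℝ := fun y => (kF ^ 2 - y ^ 2 + ε₀)⁻¹ with hh
  -- polar coordinates
  have polar : (∫ q in closedBall (0 : EuclideanSpace ℝ (Fin 3)) kF,
      (kF ^ 2 - ‖q‖ ^ 2 + ε₀)⁻¹)
      = 3 * V * ∫ y in Ioi (0:ℝ), y ^ 2 • (Icc (0:ℝ) kF).indicator h y := by
    rw [← integral_indicator measurableSet_closedBall]
    have key : ∀ q : EuclideanSpace ℝ (Fin 3),
        (closedBall (0:EuclideanSpace ℝ (Fin 3)) kF).indicator
          (fun q => (kF ^ 2 - ‖q‖ ^ 2 + ε₀)⁻¹) q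
          = (Icc (0:ℝ) kF).indicator h ‖q‖ := by
      intro q
      by_cases hq : q ∈ closedBall (0:EuclideanSpace ℝ (Fin 3)) kF
      · have hq' : ‖q‖ ∈ Icc (0:ℝ) kF :=
          ⟨norm_nonneg q, by simpa [mem_closedBall, dist_eq_norm] using hq⟩
        rw [indicator_of_mem hq, indicator_of_mem hq']
      · rw [indicator_of_notMem hq, indicator_of_notMem
          (fun hc => hq (by simpa [mem_closedBall, dist_eq_norm] using hc.2))]
    simp_rw [key]
    have := integral_fun_norm_addHaar (volume : Measure (EuclideanSpace ℝ (Fin 3)))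
      ((Icc (0:ℝ) kF).indicator h)
    simpa [mul_assoc, hV, Measure.real] using this
  -- reduce to `Ioc`
  have step1 : (∫ y in Ioi (0:ℝ), y ^ 2 • (Icc (0:ℝ) kF).indicator h y)
      = ∫ y in Ioc (0:ℝ) kF, y ^ 2 * h y := by
    have : ∀ y : ℝ, y ^ 2 • (Icc (0:ℝ) kF).indicator h y
        = (Icc (0:ℝ) kF).indicator (fun y => y ^ 2 * h y) y := by
      intro y
      by_cases hy : y ∈ Icc (0:ℝ) kF
      · rw [indicator_of_mem hy, indicator_of_mem hy, smul_eq_mul]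
      · rw [indicator_of_notMem hy, indicator_of_notMem hy, smul_zero]
    simp_rw [this]
    rw [setIntegral_indicator measurableSet_Icc]
    congr 1
    have hset : Ioi (0:ℝ) ∩ Icc 0 kF = Ioc 0 kF := by
      ext y; exact ⟨fun ⟨a,_,c⟩ => ⟨a,c⟩, fun ⟨a,c⟩ => ⟨a,a.le,c⟩⟩
    rw [hset]
  -- pointwise bound and integrability
  have hposIcc : ∀ y ∈ Icc (0:ℝ) kF, 0 < kF ^ 2 - y ^ 2 + ε₀ := by
    intro y hy
    have : y ^ 2 ≤ kF ^ 2 := pow_le_pow_left₀ hy.1 hy.2 2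
    linarith
  have hposIcc' : ∀ y ∈ Icc (0:ℝ) kF, 0 < kF * (kF - y) + ε₀ := by
    intro y hy
    have : 0 ≤ kF * (kF - y) := mul_nonneg hk.le (by linarith [hy.2])
    linarith
  have int1 : IntegrableOn (fun y => y ^ 2 * h y) (Ioc (0:ℝ) kF) := by
    apply (ContinuousOn.integrableOn_compact isCompact_Icc ?_).mono_set Ioc_subset_Icc_self
    exact (continuousOn_pow 2).mul (ContinuousOn.inv₀ (by fun_prop)
      (fun y hy => (hposIcc y hy).ne'))
  have int2 : IntegrableOn (fun y => kF ^ 2 * (kF * (kF - y) + ε₀)⁻¹) (Ioc (0:ℝ) kF) := by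
    apply (ContinuousOn.integrableOn_compact isCompact_Icc ?_).mono_set Ioc_subset_Icc_self
    exact continuousOn_const.mul (ContinuousOn.inv₀ (by fun_prop)
      (fun y hy => (hposIcc' y hy).ne'))
  have step2 : (∫ y in Ioc (0:ℝ) kF, y ^ 2 * h y)
      ≤ ∫ y in Ioc (0:ℝ) kF, kF ^ 2 * (kF * (kF - y) + ε₀)⁻¹ := by
    apply setIntegral_mono_on int1 int2 measurableSet_Ioc
    intro y hy
    have hy' : y ∈ Icc (0:ℝ) kF := Ioc_subset_Icc_self hy
    have h1 : y ^ 2 ≤ kF ^ 2 := pow_le_pow_left₀ hy'.1 hy'.2 2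
    have h2 : kF * (kF - y) + ε₀ ≤ kF ^ 2 - y ^ 2 + ε₀ := by nlinarith [hy.1.le, hy'.2]
    have := inv_anti₀ (hposIcc' y hy') h2
    exact mul_le_mul h1 this (inv_nonneg.2 (hposIcc y hy').le) (sq_nonneg kF)
  -- compute the dominating integral
  have step3 : (∫ y in Ioc (0:ℝ) kF, kF ^ 2 * (kF * (kF - y) + ε₀)⁻¹)
      = kF * (Real.log (kF ^ 2 + ε₀) - Real.log ε₀) := by
    rw [← intervalIntegral.integral_of_le hk.le]
    have key : ∀ y ∈ Set.uIcc (0:ℝ) kF,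
        HasDerivAt (fun y => -kF * Real.log (kF * (kF - y) + ε₀))
          (kF ^ 2 * (kF * (kF - y) + ε₀)⁻¹) y := by
      intro y hy
      rw [Set.uIcc_of_le hk.le] at hy
      have hupos : 0 < kF * (kF - y) + ε₀ := hposIcc' y hy
      have h1 : HasDerivAt (fun y : ℝ => kF * (kF - y) + ε₀) (-kF) y := by
        simpa using (((hasDerivAt_id y).const_sub kF).const_mul kF).add_const ε₀
      have h2 := (h1.log hupos.ne').const_mul (-kF)
      rw [show kF ^ 2 * (kF * (kF - y) + ε₀)⁻¹ = -kF * (-kF / (kF * (kF - y) + ε₀)) by ring]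
      exact h2
    have hcont : IntervalIntegrable (fun y => kF ^ 2 * (kF * (kF - y) + ε₀)⁻¹)
        volume 0 kF := by
      apply ContinuousOn.intervalIntegrable
      rw [Set.uIcc_of_le hk.le]
      exact continuousOn_const.mul (ContinuousOn.inv₀ (by fun_prop)
        (fun y hy => (hposIcc' y hy).ne'))
    rw [intervalIntegral.integral_eq_sub_of_hasDerivAt key hcont]
    simp only [sub_self, mul_zero, zero_add, sub_zero]
    rw [← sq]; ring
  -- log bound
  have step4 : Real.log (kF ^ 2 + ε₀) - Real.log ε₀ ≤ 1 + |Real.log (ε₀ / kF ^ 2)| := by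
    have hk2 : (0:ℝ) < kF ^ 2 := by positivity
    have habs : |Real.log (ε₀ / kF ^ 2)| = Real.log (kF ^ 2) - Real.log ε₀ := by
      have hlog : Real.log (ε₀ / kF ^ 2) ≤ 0 :=
        Real.log_nonpos (by positivity) ((div_le_one hk2).2 hle)
      rw [abs_of_nonpos hlog, Real.log_div he.ne' hk2.ne', neg_sub]
    have h1 : Real.log (kF ^ 2 + ε₀) ≤ Real.log (2 * kF ^ 2) :=
      Real.log_le_log (by positivity) (by linarith)
    have h2 : Real.log (2 * kF ^ 2) = Real.log 2 + Real.log (kF ^ 2) :=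
      Real.log_mul two_ne_zero hk2.ne'
    have h3 : Real.log 2 ≤ 1 := by
      have := Real.log_le_sub_one_of_pos (by norm_num : (0:ℝ) < 2); linarith
    rw [habs]; linarith
  rw [polar, step1]
  calc 3 * V * ∫ y in Ioc (0:ℝ) kF, y ^ 2 * h y
      ≤ 3 * V * (kF * (Real.log (kF ^ 2 + ε₀) - Real.log ε₀)) := by
        apply mul_le_mul_of_nonneg_left _ (by positivity)
        rw [← step3]; exact step2
    _ ≤ 3 * V * kF * (1 + |Real.log (ε₀ / kF ^ 2)|) := by
        rw [mul_assoc (3 * V)]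
        apply mul_le_mul_of_nonneg_left _ (by positivity)
        exact mul_le_mul_of_nonneg_left step4 hk.le

open Metric Set in
/-- For `0 < ε₀ ≤ k_F²`, `∫_{|q| ≤ k_F} dq/(k_F² - |q|² + ε₀) ≤ C k_F (1 + |ln(ε₀/k_F²)|)`
for a universal constant `C`; in particular for `ε₀ = ρ^{2/3+ι}`, `k_F ∼ ρ^{1/3}`, `ι > 0`
the integral is bounded by `C' ρ^{1/3} |ln ρ|`. -/
theorem stmt7 :
    (∃ C : ℝ, 0 < C ∧ ∀ kF ε₀ : ℝ, 0 < kF → 0 < ε₀ → ε₀ ≤ kF ^ 2 →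
      (∫ q in Metric.closedBall (0 : EuclideanSpace ℝ (Fin 3)) kF,
          (kF ^ 2 - ‖q‖ ^ 2 + ε₀)⁻¹)
        ≤ C * kF * (1 + |Real.log (ε₀ / kF ^ 2)|)) ∧
    ∀ ι : ℝ, 0 < ι → ∃ C' : ℝ, 0 < C' ∧ ∃ ρ₁ : ℝ, 0 < ρ₁ ∧
      ∀ ρ kF : ℝ, 0 < ρ → ρ < ρ₁ →
        ρ ^ ((1 : ℝ) / 3) ≤ kF → kF ≤ 2 * ρ ^ ((1 : ℝ) / 3) →
        (∫ q in Metric.closedBall (0 : EuclideanSpace ℝ (Fin 3)) kF,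
            (kF ^ 2 - ‖q‖ ^ 2 + ρ ^ ((2 : ℝ) / 3 + ι))⁻¹)
          ≤ C' * ρ ^ ((1 : ℝ) / 3) * |Real.log ρ| := by
  set C : ℝ := 3 * (volume (ball (0 : EuclideanSpace ℝ (Fin 3)) 1)).toReal with hC
  have hCpos : 0 < C := by
    have h1 : 0 < volume (ball (0 : EuclideanSpace ℝ (Fin 3)) 1) :=
      measure_ball_pos volume _ one_pos
    have h2 : volume (ball (0 : EuclideanSpace ℝ (Fin 3)) 1) ≠ ⊤ :=
      measure_ball_lt_top.ne
    have := ENNReal.toReal_pos h1.ne' h2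
    positivity
  have hmain := fun kF ε₀ hk he hle => stmt7_main kF ε₀ hk he hle
  refine ⟨⟨C, hCpos, hmain⟩, ?_⟩
  intro ι hι
  refine ⟨2 * C * (13/3 + ι), by positivity, Real.exp (-1), Real.exp_pos _, ?_⟩
  intro ρ kF hρ hρ1 hk1 hk2
  have hρ1' : ρ ≤ 1 := hρ1.le.trans (by
    have := Real.exp_le_exp.2 (by norm_num : (-1:ℝ) ≤ 0)
    simpa [Real.exp_zero] using this)
  have hrpos : (0:ℝ) < ρ ^ ((1:ℝ)/3) := Real.rpow_pos_of_pos hρ _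
  have hkpos : 0 < kF := hrpos.trans_le hk1
  have hεpos : (0:ℝ) < ρ ^ ((2:ℝ)/3 + ι) := Real.rpow_pos_of_pos hρ _
  -- ε₀ ≤ kF ^ 2
  have hεle : ρ ^ ((2:ℝ)/3 + ι) ≤ kF ^ 2 := by
    have h1 : ρ ^ ((2:ℝ)/3 + ι) ≤ ρ ^ ((2:ℝ)/3) :=
      Real.rpow_le_rpow_of_exponent_ge hρ hρ1' (by linarith)
    have h2 : ρ ^ ((2:ℝ)/3) = (ρ ^ ((1:ℝ)/3)) ^ 2 := by
      rw [← Real.rpow_natCast (ρ ^ ((1:ℝ)/3)) 2, ← Real.rpow_mul hρ.le]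
      norm_num
    have h3 : (ρ ^ ((1:ℝ)/3)) ^ 2 ≤ kF ^ 2 := pow_le_pow_left₀ hrpos.le hk1 2
    linarith [h1, h2 ▸ h1]
  have key := hmain kF _ hkpos hεpos hεle
  refine key.trans ?_
  -- log estimates
  have hL1 : 1 ≤ |Real.log ρ| := by
    have : Real.log ρ ≤ -1 := by
      calc Real.log ρ ≤ Real.log (Real.exp (-1)) := Real.log_le_log hρ hρ1.le
        _ = -1 := Real.log_exp _
    rw [abs_of_nonpos (by linarith)]; linarith
  set L : ℝ := |Real.log ρ|
  have hLρ : Real.log ρ = -L := by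
    have : Real.log ρ ≤ 0 := Real.log_nonpos hρ.le hρ1'
    simp [L, abs_of_nonpos this]
  have hlogε : |Real.log (ρ ^ ((2:ℝ)/3 + ι))| = ((2:ℝ)/3 + ι) * L := by
    rw [Real.log_rpow hρ, abs_mul, abs_of_pos (by linarith)]
  have hlogk : |Real.log kF| ≤ 1 + L / 3 := by
    have hlow : -(1 + L/3) ≤ Real.log kF := by
      have := Real.log_le_log hrpos hk1
      rw [Real.log_rpow hρ, hLρ] at this
      linarith
    have hhigh : Real.log kF ≤ 1 + L / 3 := by
      have h1 := Real.log_le_log hkpos hk2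
      rw [Real.log_mul two_ne_zero hrpos.ne', Real.log_rpow hρ, hLρ] at h1
      have h2 : Real.log 2 ≤ 1 := by
        have := Real.log_le_sub_one_of_pos (by norm_num : (0:ℝ) < 2); linarith
      nlinarith [abs_nonneg (Real.log ρ)]
    exact abs_le.2 ⟨hlow, hhigh⟩
  have hlogratio : 1 + |Real.log (ρ ^ ((2:ℝ)/3 + ι) / kF ^ 2)| ≤ (13/3 + ι) * L := by
    have h1 : |Real.log (ρ ^ ((2:ℝ)/3 + ι) / kF ^ 2)|
        ≤ |Real.log (ρ ^ ((2:ℝ)/3 + ι))| + |Real.log (kF ^ 2)| := by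
      rw [Real.log_div hεpos.ne' (by positivity)]
      exact (abs_sub _ _)
    have h2 : |Real.log (kF ^ 2)| = 2 * |Real.log kF| := by
      rw [Real.log_pow]; rw [abs_mul]; norm_num
    have h3 : |Real.log (kF ^ 2)| ≤ 2 + 2 * L / 3 := by
      rw [h2]; linarith [hlogk]
    rw [hlogε] at h1
    nlinarith [hL1, abs_nonneg (Real.log (ρ ^ ((2:ℝ)/3 + ι) / kF ^ 2))]
  calc C * kF * (1 + |Real.log (ρ ^ ((2:ℝ)/3 + ι) / kF ^ 2)|)
      ≤ C * (2 * ρ ^ ((1:ℝ)/3)) * ((13/3 + ι) * L) := by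
        apply mul_le_mul (mul_le_mul_of_nonneg_left hk2 hCpos.le) hlogratio
          (by positivity) (by positivity)
    _ = 2 * C * (13/3 + ι) * ρ ^ ((1:ℝ)/3) * L := by ring
end

section
/- Let k_F > 0 and ε₀ > 0. For every q with |q| ≤ k_F, ∫_{k_F < |p| < 2k_F} dp/(|p|² - k_F² + ε₀) ≤ C·k_F·(1 + |ln(ε₀/k_F²)|) for a universal constant C. -/
open MeasureTheory Set

private lemma log_aux8 {t : ℝ} (ht : 0 < t) : Real.log (1 + 1 / t) ≤ 1 + |Real.log t| := by
  have h1 : 1 + 1 / t ≤ 2 * max 1 t⁻¹ := by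
    have h2 := le_max_left (1 : ℝ) t⁻¹
    have h3 := le_max_right (1 : ℝ) t⁻¹
    rw [one_div]; linarith
  have hpos : (0 : ℝ) < 1 + 1 / t := by positivity
  have hmaxpos : (0 : ℝ) < max 1 t⁻¹ := lt_max_of_lt_left one_pos
  calc Real.log (1 + 1 / t) ≤ Real.log (2 * max 1 t⁻¹) := Real.log_le_log hpos h1
    _ = Real.log 2 + Real.log (max 1 t⁻¹) := Real.log_mul two_ne_zero hmaxpos.ne'
    _ ≤ 1 + |Real.log t| := by
        have hlog2 : Real.log 2 ≤ 1 := by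
          have := Real.log_le_sub_one_of_pos (by norm_num : (0:ℝ) < 2)
          linarith
        have hmax : Real.log (max 1 t⁻¹) ≤ |Real.log t| := by
          rcases le_total t 1 with h | h
          · have : max 1 t⁻¹ = t⁻¹ := max_eq_right (one_le_inv_iff₀.2 ⟨ht, h⟩)
            rw [this, Real.log_inv]
            exact neg_le_abs _
          · have : max 1 t⁻¹ = 1 := max_eq_left (inv_le_one_of_one_le₀ h)
            rw [this, Real.log_one]
            exact abs_nonneg _
        linarith

/-- For `k_F > 0`, `ε₀ > 0` and any `q` with `|q| ≤ k_F`,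
`∫_{k_F < |p| < 2k_F} dp/(|p|² - k_F² + ε₀) ≤ C k_F (1 + |ln(ε₀/k_F²)|)`
for a universal constant `C`. -/
theorem stmt8 :
    ∃ C : ℝ, 0 < C ∧ ∀ kF ε₀ : ℝ, 0 < kF → 0 < ε₀ →
      ∀ q : EuclideanSpace ℝ (Fin 3), ‖q‖ ≤ kF →
      (∫ p in {p : EuclideanSpace ℝ (Fin 3) | kF < ‖p‖ ∧ ‖p‖ < 2 * kF},
          (‖p‖ ^ 2 - kF ^ 2 + ε₀)⁻¹)
        ≤ C * kF * (1 + |Real.log (ε₀ / kF ^ 2)|) := by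
  set B : ℝ := (volume (Metric.ball (0 : EuclideanSpace ℝ (Fin 3)) 1)).toReal with hB
  have hB0 : 0 ≤ B := ENNReal.toReal_nonneg
  refine ⟨12 * B + 1, by positivity, ?_⟩
  intro kF ε₀ hkF hε₀ q hq
  set g : ℝ → ℝ := fun r => (r ^ 2 - kF ^ 2 + ε₀)⁻¹ with hg
  -- rewrite as an integral of a function of the norm
  have hmeasS : MeasurableSet {p : EuclideanSpace ℝ (Fin 3) | kF < ‖p‖ ∧ ‖p‖ < 2 * kF} := by
    have : {p : EuclideanSpace ℝ (Fin 3) | kF < ‖p‖ ∧ ‖p‖ < 2 * kF}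
        = (fun p : EuclideanSpace ℝ (Fin 3) => ‖p‖) ⁻¹' Ioo kF (2 * kF) := rfl
    rw [this]
    exact (isOpen_Ioo.preimage continuous_norm).measurableSet
  have key : (∫ p in {p : EuclideanSpace ℝ (Fin 3) | kF < ‖p‖ ∧ ‖p‖ < 2 * kF},
      (‖p‖ ^ 2 - kF ^ 2 + ε₀)⁻¹)
      = ∫ p : EuclideanSpace ℝ (Fin 3), (Ioo kF (2 * kF)).indicator g ‖p‖ := by
    rw [← integral_indicator hmeasS]
    congr 1
  rw [key]
  rw [integral_fun_norm_addHaar (volume : Measure (EuclideanSpace ℝ (Fin 3)))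
    ((Ioo kF (2 * kF)).indicator g)]
  have hdim : Module.finrank ℝ (EuclideanSpace ℝ (Fin 3)) = 3 := finrank_euclideanSpace_fin
  rw [hdim]
  -- reduce the radial integral
  have hIoo : Ioi (0 : ℝ) ∩ Ioo kF (2 * kF) = Ioo kF (2 * kF) :=
    inter_eq_right.2 (fun x hx => lt_trans hkF hx.1)
  have hrad : (∫ y in Ioi (0 : ℝ), y ^ (3 - 1) • (Ioo kF (2 * kF)).indicator g y)
      = ∫ y in Ioo kF (2 * kF), y ^ 2 * g y := by
    have h1 : ∀ y : ℝ, y ^ (3 - 1) • (Ioo kF (2 * kF)).indicator g y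
        = (Ioo kF (2 * kF)).indicator (fun y => y ^ 2 * g y) y := by
      intro y
      by_cases hy : y ∈ Ioo kF (2 * kF)
      · rw [Set.indicator_of_mem hy, Set.indicator_of_mem hy, smul_eq_mul]
      · rw [Set.indicator_of_notMem hy, Set.indicator_of_notMem hy, smul_zero]
    simp_rw [h1]
    rw [setIntegral_indicator measurableSet_Ioo, hIoo]
  rw [hrad]
  -- bound the radial integral
  have hcont1 : ContinuousOn (fun y : ℝ => y ^ 2 * g y) (Icc kF (2 * kF)) := by
    apply ContinuousOn.mul (by fun_prop)
    apply ContinuousOn.inv₀ (by fun_prop)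
    intro y hy
    nlinarith [hy.1]
  have hcont2 : ContinuousOn (fun y : ℝ => 4 * kF ^ 2 * (kF * (y - kF) + ε₀)⁻¹)
      (Icc kF (2 * kF)) := by
    apply ContinuousOn.mul (by fun_prop)
    apply ContinuousOn.inv₀ (by fun_prop)
    intro y hy
    nlinarith [hy.1]
  have hint1 : IntegrableOn (fun y : ℝ => y ^ 2 * g y) (Ioo kF (2 * kF)) :=
    (hcont1.integrableOn_Icc).mono_set Ioo_subset_Icc_self
  have hint2 : IntegrableOn (fun y : ℝ => 4 * kF ^ 2 * (kF * (y - kF) + ε₀)⁻¹)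
      (Ioo kF (2 * kF)) :=
    (hcont2.integrableOn_Icc).mono_set Ioo_subset_Icc_self
  have hbound : (∫ y in Ioo kF (2 * kF), y ^ 2 * g y)
      ≤ ∫ y in Ioo kF (2 * kF), 4 * kF ^ 2 * (kF * (y - kF) + ε₀)⁻¹ := by
    apply setIntegral_mono_on hint1 hint2 measurableSet_Ioo
    intro y hy
    have hy1 := hy.1
    have hy2 := hy.2
    have hd1 : 0 < kF * (y - kF) + ε₀ := by nlinarith
    have hd2 : kF * (y - kF) + ε₀ ≤ y ^ 2 - kF ^ 2 + ε₀ := by nlinarith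
    have hinv : (y ^ 2 - kF ^ 2 + ε₀)⁻¹ ≤ (kF * (y - kF) + ε₀)⁻¹ :=
      inv_anti₀ hd1 hd2
    have hsq : y ^ 2 ≤ 4 * kF ^ 2 := by nlinarith
    exact mul_le_mul hsq hinv (inv_nonneg.2 (by nlinarith)) (by positivity)
  -- compute the comparison integral
  have hcomp : (∫ y in Ioo kF (2 * kF), 4 * kF ^ 2 * (kF * (y - kF) + ε₀)⁻¹)
      = 4 * kF * Real.log ((kF ^ 2 + ε₀) / ε₀) := by
    rw [← integral_Ioc_eq_integral_Ioo,
      ← intervalIntegral.integral_of_le (by linarith : kF ≤ 2 * kF)]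
    have hfun : (fun y : ℝ => 4 * kF ^ 2 * (kF * (y - kF) + ε₀)⁻¹)
        = fun y : ℝ => 4 * kF ^ 2 * (kF * y + (ε₀ - kF ^ 2))⁻¹ := by
      funext y; ring_nf
    rw [hfun, intervalIntegral.integral_const_mul]
    have := intervalIntegral.integral_comp_mul_add (a := kF) (b := 2 * kF)
      (f := fun u : ℝ => u⁻¹) hkF.ne' (ε₀ - kF ^ 2)
    rw [this]
    have hb1 : kF * kF + (ε₀ - kF ^ 2) = ε₀ := by ring
    have hb2 : kF * (2 * kF) + (ε₀ - kF ^ 2) = kF ^ 2 + ε₀ := by ring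
    rw [hb1, hb2, integral_inv (Set.notMem_uIcc_of_lt hε₀ (by positivity)), smul_eq_mul]
    field_simp
  have hlogrw : (kF ^ 2 + ε₀) / ε₀ = 1 + 1 / (ε₀ / kF ^ 2) := by
    field_simp
    ring
  have hlog : Real.log ((kF ^ 2 + ε₀) / ε₀) ≤ 1 + |Real.log (ε₀ / kF ^ 2)| := by
    rw [hlogrw]
    exact log_aux8 (by positivity)
  have hlog0 : 0 ≤ Real.log ((kF ^ 2 + ε₀) / ε₀) :=
    Real.log_nonneg (by rw [le_div_iff₀ hε₀]; nlinarith)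
  -- conclude
  rw [nsmul_eq_mul, smul_eq_mul]
  have habs0 : (0:ℝ) ≤ |Real.log (ε₀ / kF ^ 2)| := abs_nonneg _
  calc (3 : ℝ) * (B * ∫ y in Ioo kF (2 * kF), y ^ 2 * g y)
      ≤ 3 * (B * (4 * kF * Real.log ((kF ^ 2 + ε₀) / ε₀))) := by
        have h := hbound.trans_eq hcomp
        nlinarith [mul_le_mul_of_nonneg_left h hB0]
    _ ≤ 3 * (B * (4 * kF * (1 + |Real.log (ε₀ / kF ^ 2)|))) := by
        have h := mul_le_mul_of_nonneg_left hlog (by positivity : (0:ℝ) ≤ 4 * kF)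
        nlinarith [mul_le_mul_of_nonneg_left h hB0]
    _ ≤ (12 * B + 1) * kF * (1 + |Real.log (ε₀ / kF ^ 2)|) := by
        nlinarith [mul_pos hkF (by linarith : (0:ℝ) < 1 + |Real.log (ε₀ / kF ^ 2)|)]
end

section
/- Let β, μ > 0 with βμ ≥ 1, and define ρ₀(β,μ) = (q/(2π)³)·∫_{ℝ³} dx/(1 + e^{β(|x|²-μ)}) for a positive integer q. Then ρ₀(β,μ) = (q/(6π²))·β^{-3/2}·((βμ)^{3/2} + O((βμ)^{-1/2})), i.e. there is a universal constant C with |ρ₀(β,μ) - (q/(6π²))·μ^{3/2}| ≤ C·q·β^{-3/2}·(βμ)^{-1/2}. -/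
open MeasureTheory
open Set Real


lemma aux_one_sub (x : ℝ) : 1 - (1 + Real.exp (-x))⁻¹ = (1 + Real.exp x)⁻¹ := by
  have h3 : (0:ℝ) < Real.exp x := Real.exp_pos x
  rw [Real.exp_neg]
  have h1 : (0:ℝ) < 1 + (Real.exp x)⁻¹ := by positivity
  have h2 : (0:ℝ) < 1 + Real.exp x := by positivity
  field_simp
  ring

lemma aux_inv_le (x : ℝ) : (1 + Real.exp x)⁻¹ ≤ Real.exp (-x) := by
  rw [Real.exp_neg]
  exact inv_anti₀ (Real.exp_pos x) (by linarith [Real.exp_pos x])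

lemma aux_sqrt_add (x y : ℝ) (hx : 0 ≤ x) (hy : 0 ≤ y) :
    Real.sqrt (x + y) ≤ Real.sqrt x + Real.sqrt y := by
  have h1 := Real.sq_sqrt hx
  have h2 := Real.sq_sqrt hy
  have h3 := Real.sqrt_nonneg x
  have h4 := Real.sqrt_nonneg y
  have h : x + y ≤ (Real.sqrt x + Real.sqrt y) ^ 2 := by nlinarith [mul_nonneg h3 h4]
  calc Real.sqrt (x + y) ≤ Real.sqrt ((Real.sqrt x + Real.sqrt y) ^ 2) := Real.sqrt_le_sqrt h
    _ = _ := Real.sqrt_sq (by positivity)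

lemma aux_texp_int (b : ℝ) (hb : 0 < b) :
    IntegrableOn (fun t => t * Real.exp (-b * t)) (Ioi (0:ℝ)) := by
  have h := integrableOn_rpow_mul_exp_neg_mul_rpow (p := 1) (s := 1) (by norm_num) one_pos hb
  exact h.congr_fun (fun x hx => by simp [Real.rpow_one]) measurableSet_Ioi

lemma aux_texp_val (b : ℝ) (hb : 0 < b) :
    ∫ t in Ioi (0:ℝ), t * Real.exp (-b * t) = (b^2)⁻¹ := by
  have h := integral_rpow_mul_exp_neg_mul_rpow (p := 1) (q := 1) one_pos (by norm_num) hb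
  rw [setIntegral_congr_fun measurableSet_Ioi (fun x hx => by
    simp [Real.rpow_one] : EqOn (fun t => t * Real.exp (-b * t)) (fun x => x ^ (1:ℝ) * Real.exp (-b * x ^ (1:ℝ))) (Ioi 0))]
  rw [h, show ((1:ℝ)+1)/1 = 2 by norm_num, Real.Gamma_two,
    show (-(1+1)/1 : ℝ) = -2 by norm_num, Real.rpow_neg hb.le, Real.rpow_two]
  ring

lemma fermi_key (β μ : ℝ) (hβ : 0 < β) (hμ : 0 < μ) :
    |(∫ e in Ioi (0:ℝ), Real.sqrt e * (1 + Real.exp (β * (e - μ)))⁻¹) - 2/3 * μ ^ ((3:ℝ)/2)|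
    ≤ 2 / (Real.sqrt μ * β ^ 2) := by
  have hexp_pos : ∀ x : ℝ, (0:ℝ) < 1 + Real.exp x := fun x => by positivity
  have hcont_fE : Continuous (fun e : ℝ => (1 + Real.exp (β * (e - μ)))⁻¹) :=
    Continuous.inv₀ (by fun_prop) (fun x => (hexp_pos _).ne')
  have hcont_h : Continuous (fun t : ℝ => (1 + Real.exp (β * t))⁻¹) :=
    Continuous.inv₀ (by fun_prop) (fun x => (hexp_pos _).ne')
  have hh_nonneg : ∀ t : ℝ, 0 ≤ (1 + Real.exp (β * t))⁻¹ := fun t => by positivity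
  have hh_le : ∀ t : ℝ, (1 + Real.exp (β * t))⁻¹ ≤ Real.exp (-(β * t)) := fun t => aux_inv_le _
  have hsμ : 0 < Real.sqrt μ := Real.sqrt_pos.2 hμ
  -- integrability of the main integrand on Ioi 0
  have hG_int : IntegrableOn (fun e : ℝ => Real.sqrt e * (1 + Real.exp (β * (e - μ)))⁻¹) (Ioi 0) := by
    apply Integrable.mono'
      ((integrableOn_rpow_mul_exp_neg_mul_rpow (by norm_num : (-1:ℝ) < 1/2) (one_pos : (0:ℝ) < 1) hβ).const_mul
        (Real.exp (β * μ)))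
      ((Real.continuous_sqrt.mul hcont_fE).aestronglyMeasurable.restrict)
    refine (ae_restrict_iff' measurableSet_Ioi).2 (Filter.Eventually.of_forall fun e he => ?_)
    have he0 : (0:ℝ) < e := he
    simp only [Pi.mul_apply]
    rw [Real.norm_eq_abs, abs_of_nonneg (mul_nonneg (Real.sqrt_nonneg e) (inv_nonneg.2 (hexp_pos (β * (e - μ))).le))]
    rw [Real.rpow_one]
    have h1 : (1 + Real.exp (β * (e - μ)))⁻¹ ≤ Real.exp (β*μ) * Real.exp (-β * e) := by
      calc (1 + Real.exp (β * (e - μ)))⁻¹ ≤ Real.exp (-(β * (e - μ))) := aux_inv_le _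
        _ = Real.exp (β*μ) * Real.exp (-β * e) := by rw [← Real.exp_add]; ring_nf
    have h2 : Real.sqrt e = e ^ ((1:ℝ)/2) := Real.sqrt_eq_rpow e
    rw [← h2]
    calc Real.sqrt e * (1 + Real.exp (β * (e - μ)))⁻¹
        ≤ Real.sqrt e * (Real.exp (β*μ) * Real.exp (-β * e)) := by
          apply mul_le_mul_of_nonneg_left h1 (Real.sqrt_nonneg e)
      _ = Real.exp (β*μ) * (Real.sqrt e * Real.exp (-β * e)) := by ring
  -- integrability of T t = √(μ+t) * h t on Ioi 0
  have hT_cont : Continuous (fun t : ℝ => Real.sqrt (μ + t) * (1 + Real.exp (β * t))⁻¹) :=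
    (Real.continuous_sqrt.comp (by fun_prop)).mul hcont_h
  have hT_int : IntegrableOn (fun t : ℝ => Real.sqrt (μ + t) * (1 + Real.exp (β * t))⁻¹) (Ioi 0) := by
    have hint : IntegrableOn
        (fun t : ℝ => Real.sqrt μ * Real.exp (-β * t) + t ^ ((1:ℝ)/2) * Real.exp (-β * t ^ (1:ℝ)))
        (Ioi 0) := by
      apply Integrable.add
      · exact (exp_neg_integrableOn_Ioi 0 hβ).const_mul _
      · exact integrableOn_rpow_mul_exp_neg_mul_rpow (by norm_num : (-1:ℝ) < 1/2) one_pos hβ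
    apply Integrable.mono' hint hT_cont.aestronglyMeasurable.restrict
    refine (ae_restrict_iff' measurableSet_Ioi).2 (Filter.Eventually.of_forall fun t ht => ?_)
    have ht0 : (0:ℝ) < t := ht
    rw [Real.norm_eq_abs, abs_of_nonneg (mul_nonneg (Real.sqrt_nonneg _) (hh_nonneg t))]
    rw [Real.rpow_one, ← Real.sqrt_eq_rpow]
    calc Real.sqrt (μ + t) * (1 + Real.exp (β * t))⁻¹
        ≤ (Real.sqrt μ + Real.sqrt t) * Real.exp (-β * t) := by
          apply mul_le_mul (aux_sqrt_add μ t hμ.le ht0.le) ?_ (hh_nonneg t) (by positivity)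
          rw [neg_mul]; exact hh_le t
      _ = Real.sqrt μ * Real.exp (-β * t) + Real.sqrt t * Real.exp (-β * t) := by ring
  -- split main integral over (0,μ] and (μ,∞)
  have hG_Ioc : IntegrableOn (fun e : ℝ => Real.sqrt e * (1 + Real.exp (β * (e - μ)))⁻¹)
      (Ioc (0:ℝ) μ) := hG_int.mono_set Ioc_subset_Ioi_self
  have hsplitG : (∫ e in Ioi (0:ℝ), Real.sqrt e * (1 + Real.exp (β * (e - μ)))⁻¹)
      = (∫ e in Ioc (0:ℝ) μ, Real.sqrt e * (1 + Real.exp (β * (e - μ)))⁻¹)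
        + ∫ e in Ioi μ, Real.sqrt e * (1 + Real.exp (β * (e - μ)))⁻¹ := by
    rw [← setIntegral_union (Ioc_disjoint_Ioi le_rfl) measurableSet_Ioi hG_Ioc
      (hG_int.mono_set (Ioi_subset_Ioi hμ.le)), Ioc_union_Ioi_eq_Ioi hμ.le]
  -- shift identity for the part on (μ,∞)
  have hshift : (∫ e in Ioi μ, Real.sqrt e * (1 + Real.exp (β * (e - μ)))⁻¹)
      = ∫ t in Ioi (0:ℝ), Real.sqrt (μ + t) * (1 + Real.exp (β * t))⁻¹ := by
    have hm : MeasurePreserving (fun t : ℝ => t + μ) volume volume :=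
      measurePreserving_add_right volume μ
    rw [← hm.setIntegral_preimage_emb (measurableEmbedding_addRight μ)
      (fun e => Real.sqrt e * (1 + Real.exp (β * (e - μ)))⁻¹) (Ioi μ)]
    have hpre : (fun t : ℝ => t + μ) ⁻¹' (Ioi μ) = Ioi 0 := by
      ext t; simp
    rw [hpre]
    refine setIntegral_congr_fun measurableSet_Ioi (fun t ht => ?_)
    rw [show t + μ - μ = t by ring, add_comm μ t]
  -- reflection identity on (0,μ]
  have hrefl : (∫ e in Ioc (0:ℝ) μ, Real.sqrt e * (1 - (1 + Real.exp (β * (e - μ)))⁻¹))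
      = ∫ t in Ioc (0:ℝ) μ, Real.sqrt (μ - t) * (1 + Real.exp (β * t))⁻¹ := by
    rw [← intervalIntegral.integral_of_le hμ.le, ← intervalIntegral.integral_of_le hμ.le]
    have h := intervalIntegral.integral_comp_sub_left (a := 0) (b := μ)
      (fun e => Real.sqrt e * (1 - (1 + Real.exp (β * (e - μ)))⁻¹)) μ
    rw [sub_self, sub_zero] at h
    rw [← h]
    refine intervalIntegral.integral_congr (fun t ht => ?_)
    rw [show β * (μ - t - μ) = -(β * t) by ring, aux_one_sub]
  -- the elementary integral of √e
  have hsqint : (∫ e in Ioc (0:ℝ) μ, Real.sqrt e) = 2/3 * μ ^ ((3:ℝ)/2) := by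
    rw [← intervalIntegral.integral_of_le hμ.le]
    have h : ∫ e in (0:ℝ)..μ, Real.sqrt e = ∫ e in (0:ℝ)..μ, e ^ ((1:ℝ)/2) :=
      intervalIntegral.integral_congr fun x hx => Real.sqrt_eq_rpow x
    rw [h, integral_rpow (Or.inl (by norm_num))]
    rw [show (1:ℝ)/2 + 1 = (3:ℝ)/2 by norm_num, Real.zero_rpow (by norm_num)]
    ring
  have hsq_intOn : IntegrableOn (fun e : ℝ => Real.sqrt e) (Ioc (0:ℝ) μ) :=
    Real.continuous_sqrt.integrableOn_Ioc
  have hdiff : (∫ e in Ioc (0:ℝ) μ, Real.sqrt e * (1 - (1 + Real.exp (β * (e - μ)))⁻¹))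
      = (2/3 * μ ^ ((3:ℝ)/2)) - ∫ e in Ioc (0:ℝ) μ, Real.sqrt e * (1 + Real.exp (β * (e - μ)))⁻¹ := by
    rw [← hsqint, ← integral_sub hsq_intOn hG_Ioc]
    exact setIntegral_congr_fun measurableSet_Ioc fun e he => by ring
  -- main identity
  have hmain : (∫ e in Ioi (0:ℝ), Real.sqrt e * (1 + Real.exp (β * (e - μ)))⁻¹) - 2/3 * μ ^ ((3:ℝ)/2)
      = (∫ t in Ioi (0:ℝ), Real.sqrt (μ + t) * (1 + Real.exp (β * t))⁻¹)
        - ∫ t in Ioc (0:ℝ) μ, Real.sqrt (μ - t) * (1 + Real.exp (β * t))⁻¹ := by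
    rw [hsplitG, hshift, ← hrefl, hdiff]; ring
  -- split T over (0,μ] and (μ,∞)
  have hT_Ioc : IntegrableOn (fun t : ℝ => Real.sqrt (μ + t) * (1 + Real.exp (β * t))⁻¹)
      (Ioc (0:ℝ) μ) := hT_int.mono_set Ioc_subset_Ioi_self
  have hsplitT : (∫ t in Ioi (0:ℝ), Real.sqrt (μ + t) * (1 + Real.exp (β * t))⁻¹)
      = (∫ t in Ioc (0:ℝ) μ, Real.sqrt (μ + t) * (1 + Real.exp (β * t))⁻¹)
        + ∫ t in Ioi μ, Real.sqrt (μ + t) * (1 + Real.exp (β * t))⁻¹ := by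
    rw [← setIntegral_union (Ioc_disjoint_Ioi le_rfl) measurableSet_Ioi hT_Ioc
      (hT_int.mono_set (Ioi_subset_Ioi hμ.le)), Ioc_union_Ioi_eq_Ioi hμ.le]
  have hR_int : IntegrableOn (fun t : ℝ => Real.sqrt (μ - t) * (1 + Real.exp (β * t))⁻¹)
      (Ioc (0:ℝ) μ) :=
    ((Real.continuous_sqrt.comp (by fun_prop)).mul hcont_h).integrableOn_Ioc
  have hDD : (∫ e in Ioi (0:ℝ), Real.sqrt e * (1 + Real.exp (β * (e - μ)))⁻¹) - 2/3 * μ ^ ((3:ℝ)/2)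
      = (∫ t in Ioc (0:ℝ) μ, (Real.sqrt (μ + t) * (1 + Real.exp (β * t))⁻¹
            - Real.sqrt (μ - t) * (1 + Real.exp (β * t))⁻¹))
        + ∫ t in Ioi μ, Real.sqrt (μ + t) * (1 + Real.exp (β * t))⁻¹ := by
    rw [hmain, hsplitT, integral_sub hT_Ioc hR_int]; ring
  -- pointwise nonnegativity on (0,μ]
  have hptnn : ∀ t ∈ Ioc (0:ℝ) μ, 0 ≤ Real.sqrt (μ + t) * (1 + Real.exp (β * t))⁻¹
      - Real.sqrt (μ - t) * (1 + Real.exp (β * t))⁻¹ := by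
    intro t ht
    have h1 : Real.sqrt (μ - t) ≤ Real.sqrt (μ + t) := Real.sqrt_le_sqrt (by linarith [ht.1])
    have h2 := hh_nonneg t
    nlinarith
  -- bound on (0,μ]
  have hbound1 : (∫ t in Ioc (0:ℝ) μ, (Real.sqrt (μ + t) * (1 + Real.exp (β * t))⁻¹
        - Real.sqrt (μ - t) * (1 + Real.exp (β * t))⁻¹))
      ≤ ∫ t in Ioc (0:ℝ) μ, 2 / Real.sqrt μ * (t * Real.exp (-β * t)) := by
    apply integral_mono_of_nonneg
    · exact (ae_restrict_iff' measurableSet_Ioc).2 (Filter.Eventually.of_forall hptnn)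
    · exact (((aux_texp_int β hβ).mono_set Ioc_subset_Ioi_self).const_mul _)
    · refine (ae_restrict_iff' measurableSet_Ioc).2 (Filter.Eventually.of_forall fun t ht => ?_)
      obtain ⟨ht0, htμ⟩ := ht
      have hu2 : Real.sqrt (μ + t) ^ 2 = μ + t := Real.sq_sqrt (by linarith)
      have hv2 : Real.sqrt (μ - t) ^ 2 = μ - t := Real.sq_sqrt (by linarith)
      have ha2 : Real.sqrt μ ^ 2 = μ := Real.sq_sqrt hμ.le
      have hu0 : 0 ≤ Real.sqrt (μ + t) := Real.sqrt_nonneg _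
      have hv0 : 0 ≤ Real.sqrt (μ - t) := Real.sqrt_nonneg _
      have hvu : Real.sqrt (μ - t) ≤ Real.sqrt (μ + t) := Real.sqrt_le_sqrt (by linarith)
      have hau : Real.sqrt μ ≤ Real.sqrt (μ + t) := Real.sqrt_le_sqrt (by linarith)
      have hkey0 : (Real.sqrt (μ + t) - Real.sqrt (μ - t)) * Real.sqrt μ ≤ 2 * t := by
        nlinarith [mul_nonneg (sub_nonneg.2 hvu) hv0, mul_nonneg (sub_nonneg.2 hau) (sub_nonneg.2 hvu)]
      have hkey : Real.sqrt (μ + t) - Real.sqrt (μ - t) ≤ 2 * t / Real.sqrt μ :=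
        (le_div_iff₀ hsμ).2 hkey0
      have hhle := hh_le t
      have hhnn := hh_nonneg t
      calc Real.sqrt (μ + t) * (1 + Real.exp (β * t))⁻¹ - Real.sqrt (μ - t) * (1 + Real.exp (β * t))⁻¹
          = (Real.sqrt (μ + t) - Real.sqrt (μ - t)) * (1 + Real.exp (β * t))⁻¹ := by ring
        _ ≤ (2 * t / Real.sqrt μ) * Real.exp (-(β * t)) := by
            apply mul_le_mul hkey hhle hhnn (by positivity)
        _ = 2 / Real.sqrt μ * (t * Real.exp (-β * t)) := by rw [neg_mul]; ring
  -- bound on (μ,∞)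
  have hbound2 : (∫ t in Ioi μ, Real.sqrt (μ + t) * (1 + Real.exp (β * t))⁻¹)
      ≤ ∫ t in Ioi μ, 2 / Real.sqrt μ * (t * Real.exp (-β * t)) := by
    apply integral_mono_of_nonneg
    · exact Filter.Eventually.of_forall fun t => mul_nonneg (Real.sqrt_nonneg _) (hh_nonneg _)
    · exact (((aux_texp_int β hβ).mono_set (Ioi_subset_Ioi hμ.le)).const_mul _)
    · refine (ae_restrict_iff' measurableSet_Ioi).2 (Filter.Eventually.of_forall fun t ht => ?_)
      have htμ : μ < t := ht
      have ht0 : 0 < t := hμ.trans htμ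
      have hw2 : Real.sqrt (μ + t) ^ 2 = μ + t := Real.sq_sqrt (by linarith)
      have ha2 : Real.sqrt μ ^ 2 = μ := Real.sq_sqrt hμ.le
      have hw0 : 0 ≤ Real.sqrt (μ + t) := Real.sqrt_nonneg _
      have hsq : (Real.sqrt μ * Real.sqrt (μ + t)) ^ 2 ≤ (2 * t) ^ 2 := by nlinarith
      have haw : Real.sqrt μ * Real.sqrt (μ + t) ≤ 2 * t := by
        have h1 := Real.sqrt_le_sqrt hsq
        rwa [Real.sqrt_sq (by positivity), Real.sqrt_sq (by positivity)] at h1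
      have hwle : Real.sqrt (μ + t) ≤ 2 * t / Real.sqrt μ := by
        rw [le_div_iff₀ hsμ]
        linarith [haw, mul_comm (Real.sqrt μ) (Real.sqrt (μ + t))]
      calc Real.sqrt (μ + t) * (1 + Real.exp (β * t))⁻¹
          ≤ (2 * t / Real.sqrt μ) * Real.exp (-(β * t)) :=
            mul_le_mul hwle (hh_le t) (hh_nonneg t) (by positivity)
        _ = 2 / Real.sqrt μ * (t * Real.exp (-β * t)) := by rw [neg_mul]; ring
  -- nonnegativity of the two pieces
  have hpos1 : 0 ≤ ∫ t in Ioc (0:ℝ) μ, (Real.sqrt (μ + t) * (1 + Real.exp (β * t))⁻¹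
      - Real.sqrt (μ - t) * (1 + Real.exp (β * t))⁻¹) :=
    setIntegral_nonneg measurableSet_Ioc hptnn
  have hpos2 : 0 ≤ ∫ t in Ioi μ, Real.sqrt (μ + t) * (1 + Real.exp (β * t))⁻¹ :=
    setIntegral_nonneg measurableSet_Ioi fun t ht => mul_nonneg (Real.sqrt_nonneg _) (hh_nonneg _)
  -- total of the dominating integrals
  have htot : (∫ t in Ioc (0:ℝ) μ, 2 / Real.sqrt μ * (t * Real.exp (-β * t)))
      + (∫ t in Ioi μ, 2 / Real.sqrt μ * (t * Real.exp (-β * t)))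
      = 2 / (Real.sqrt μ * β ^ 2) := by
    rw [← setIntegral_union (Ioc_disjoint_Ioi le_rfl) measurableSet_Ioi
      (((aux_texp_int β hβ).mono_set Ioc_subset_Ioi_self).const_mul _)
      (((aux_texp_int β hβ).mono_set (Ioi_subset_Ioi hμ.le)).const_mul _),
      Ioc_union_Ioi_eq_Ioi hμ.le, integral_const_mul, aux_texp_val β hβ]
    field_simp
  -- conclude
  rw [hDD, abs_le]
  constructor
  · have : (0:ℝ) ≤ 2 / (Real.sqrt μ * β ^ 2) := by positivity
    linarith
  · linarith [hbound1, hbound2, htot.le, htot.ge]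

lemma fermi_ball_vol : (volume (Metric.ball (0 : EuclideanSpace ℝ (Fin 3)) 1)).toReal = 4 * π / 3 := by
  rw [EuclideanSpace.volume_ball]
  have hc : Fintype.card (Fin 3) = 3 := by simp
  rw [hc]
  have hG : Real.Gamma ((3:ℕ) / 2 + 1) = 3 / 4 * Real.sqrt π := by
    push_cast
    rw [show (3:ℝ)/2 + 1 = (3/2) + 1 by norm_num, Real.Gamma_add_one (by norm_num)]
    rw [show (3:ℝ)/2 = 1/2 + 1 by norm_num, Real.Gamma_add_one (by norm_num),
      Real.Gamma_one_half_eq]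
    ring
  have hsq : Real.sqrt π ^ 3 = π * Real.sqrt π := by
    have h : Real.sqrt π ^ 2 = π := Real.sq_sqrt pi_pos.le
    calc Real.sqrt π ^ 3 = Real.sqrt π ^ 2 * Real.sqrt π := by ring
      _ = π * Real.sqrt π := by rw [h]
  rw [hG]
  have h1 : (ENNReal.ofReal (1:ℝ)) ^ 3 = 1 := by simp
  rw [h1, one_mul, ENNReal.toReal_ofReal (by positivity)]
  rw [hsq]
  rw [div_eq_div_iff (by positivity : (3:ℝ)/4 * Real.sqrt π ≠ 0) (by norm_num : (3:ℝ) ≠ 0)]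
  ring

lemma fermi_radial (β μ : ℝ) :
    ∫ x : EuclideanSpace ℝ (Fin 3), (1 + Real.exp (β * (‖x‖ ^ 2 - μ)))⁻¹
    = 4 * π * ∫ y in Ioi (0:ℝ), y ^ 2 * (1 + Real.exp (β * (y ^ 2 - μ)))⁻¹ := by
  have h := MeasureTheory.integral_fun_norm_addHaar (volume : Measure (EuclideanSpace ℝ (Fin 3)))
    (fun r => (1 + Real.exp (β * (r ^ 2 - μ)))⁻¹)
  have hdim : Module.finrank ℝ (EuclideanSpace ℝ (Fin 3)) = 3 := by
    simp [finrank_euclideanSpace]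
  rw [hdim] at h
  rw [h, measureReal_def, fermi_ball_vol]
  simp only [smul_eq_mul, nsmul_eq_mul, Nat.cast_ofNat]
  norm_num
  ring

lemma fermi_sub (β μ : ℝ) :
    ∫ y in Ioi (0:ℝ), y ^ 2 * (1 + Real.exp (β * (y ^ 2 - μ)))⁻¹
    = (1/2) * ∫ e in Ioi (0:ℝ), Real.sqrt e * (1 + Real.exp (β * (e - μ)))⁻¹ := by
  have h := integral_comp_rpow_Ioi_of_pos
    (g := fun e => Real.sqrt e * (1 + Real.exp (β * (e - μ)))⁻¹) (p := 2) two_pos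
  rw [← h, ← integral_const_mul]
  refine setIntegral_congr_fun measurableSet_Ioi (fun x hx => ?_)
  have hx0 : (0:ℝ) < x := hx
  have h2 : x ^ (2:ℝ) = x ^ 2 := by
    rw [← Real.rpow_natCast x 2]; norm_num
  have h1 : x ^ ((2:ℝ) - 1) = x := by norm_num
  simp only [smul_eq_mul, h2, h1]
  rw [Real.sqrt_sq hx0.le]
  ring

/-- Low-temperature asymptotics of the free Fermi gas density: with
`ρ₀(β,μ) = (q/(2π)³)∫ dx/(1+e^{β(|x|²-μ)})`, for `βμ ≥ 1`,
`|ρ₀(β,μ) - (q/(6π²))μ^{3/2}| ≤ C q β^{-3/2}(βμ)^{-1/2}` with a universal `C`. -/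
theorem stmt14 :
    ∃ C : ℝ, 0 < C ∧ ∀ (β μ : ℝ) (q : ℕ), 0 < β → 0 < μ → 0 < q → 1 ≤ β * μ →
      |((q : ℝ) / (2 * Real.pi) ^ 3) *
          (∫ x : EuclideanSpace ℝ (Fin 3), (1 + Real.exp (β * (‖x‖ ^ 2 - μ)))⁻¹)
        - ((q : ℝ) / (6 * Real.pi ^ 2)) * μ ^ ((3 : ℝ) / 2)|
      ≤ C * q * β ^ (-(3 : ℝ) / 2) * (β * μ) ^ (-(1 : ℝ) / 2) := by
  refine ⟨1, one_pos, fun β μ q hβ hμ hq hβμ => ?_⟩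
  have hπ : (0:ℝ) < π := pi_pos
  have hsμ : 0 < Real.sqrt μ := Real.sqrt_pos.2 hμ
  rw [fermi_radial β μ, fermi_sub β μ]
  have hexpr : (q:ℝ)/(2*π)^3 * (4*π*((1/2) * ∫ e in Ioi (0:ℝ), Real.sqrt e * (1 + Real.exp (β * (e - μ)))⁻¹))
      - (q:ℝ)/(6*π^2) * μ^((3:ℝ)/2)
      = (q:ℝ)/(4*π^2) * ((∫ e in Ioi (0:ℝ), Real.sqrt e * (1 + Real.exp (β * (e - μ)))⁻¹)
          - 2/3*μ^((3:ℝ)/2)) := by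
    field_simp
    ring
  rw [hexpr, abs_mul, abs_of_nonneg (by positivity : (0:ℝ) ≤ (q:ℝ)/(4*π^2))]
  have hkey := fermi_key β μ hβ hμ
  have hrhs : β ^ (-(3:ℝ)/2) * (β*μ) ^ (-(1:ℝ)/2) = (Real.sqrt μ * β^2)⁻¹ := by
    rw [Real.mul_rpow hβ.le hμ.le, ← mul_assoc, ← Real.rpow_add hβ,
      show -(3:ℝ)/2 + -(1:ℝ)/2 = -(2:ℝ) by norm_num,
      Real.rpow_neg hβ.le, Real.rpow_two,
      show -(1:ℝ)/2 = -(1/2:ℝ) by norm_num, Real.rpow_neg hμ.le, ← Real.sqrt_eq_rpow,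
      mul_comm ((β^2)⁻¹) _, ← mul_inv]
  calc (q:ℝ)/(4*π^2) * |(∫ e in Ioi (0:ℝ), Real.sqrt e * (1 + Real.exp (β * (e - μ)))⁻¹)
          - 2/3*μ^((3:ℝ)/2)|
      ≤ (q:ℝ)/(4*π^2) * (2 / (Real.sqrt μ * β ^ 2)) := by
        exact mul_le_mul_of_nonneg_left hkey (by positivity)
    _ ≤ 1 * (q:ℝ) * β ^ (-(3:ℝ)/2) * (β*μ) ^ (-(1:ℝ)/2) := by
        rw [mul_assoc, hrhs]
        have hπ2 : (1:ℝ) ≤ π^2 := by nlinarith [Real.pi_gt_three]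
        have hq0 : (0:ℝ) ≤ (q:ℝ) := Nat.cast_nonneg q
        have hinv : (0:ℝ) ≤ (Real.sqrt μ * β^2)⁻¹ := by positivity
        have heq : (q:ℝ)/(4*π^2) * (2 / (Real.sqrt μ * β ^ 2))
            = ((q:ℝ) * 2/(4*π^2)) * (Real.sqrt μ * β^2)⁻¹ := by ring
        rw [heq, one_mul]
        apply mul_le_mul_of_nonneg_right _ hinv
        rw [div_le_iff₀ (by positivity : (0:ℝ) < 4*π^2)]
        nlinarith
end
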